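/- Let g ∈ ℝ³, k > 0, and let x(t) ∈ ℝ^m be a bounded (measurable) input with Π(t) ∈ ℝ^{3×m} satisfying ‖Π(t)‖_F ≤ √2 k ‖g‖² for all t. Along solutions of ğ̇ = k(ğ × g) × ğ − [ğ]_× Π(t)x on 𝕊²_g, the function L₁ = ½‖g − ğ‖² satisfies the differential inequality L̇₁ ≤ −2k‖g‖² L₁ + c₁ + c₂‖x‖ for suitable constants c₁, c₂ ≥ 0 depending only on k and ‖g‖. -/

import Mathlib

/-! The observer field splits as `(ğ × g) × ğ = ‖ğ‖² g − (g·ğ) ğ` plus `ğ × w`, and `ğ × w ⊥ ğ`, so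
`L̇₁ = −k(‖g‖⁴ − (g·ğ)²) + g·(ğ × Π x)` on `𝕊²_g`. Writing `s = g·ğ` and `G = ‖g‖²`, the first term
equals `−2kG·L₁ + k(G − s)²`, and `k(G − s)² ≤ 4kG²` by Cauchy–Schwarz; the second is at most
`‖g‖‖ğ‖‖Π‖_F‖x‖ ≤ √2 k G² ‖x‖`. -/

open Matrix

def skew (x : Fin 3 → ℝ) : Matrix (Fin 3) (Fin 3) ℝ :=
  !![0, -x 2, x 1; x 2, 0, -x 0; -x 1, x 0, 0]

def cross (u v : Fin 3 → ℝ) : Fin 3 → ℝ := (skew u).mulVec v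

lemma skew_mulVec (u v : Fin 3 → ℝ) : skew u *ᵥ v = u ⨯₃ v := by
  ext i
  fin_cases i <;> simp [skew, cross_apply, mulVec, dotProduct, Fin.sum_univ_three] <;> ring

lemma cross_eq_crossProduct (u v : Fin 3 → ℝ) : cross u v = u ⨯₃ v :=
  skew_mulVec u v

lemma dotProduct_self_nonneg {ι : Type*} [Fintype ι] (u : ι → ℝ) : 0 ≤ u ⬝ᵥ u :=
  Finset.sum_nonneg fun i _ => mul_self_nonneg (u i)

lemma sq_dotProduct_le {ι : Type*} [Fintype ι] (u v : ι → ℝ) :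
    (u ⬝ᵥ v) ^ 2 ≤ (u ⬝ᵥ u) * (v ⬝ᵥ v) := by
  simpa [dotProduct, sq] using Finset.sum_mul_sq_le_sq_mul_sq Finset.univ u v

lemma mulVec_dotProduct_self_le {ι κ : Type*} [Fintype ι] [Fintype κ] (P : Matrix ι κ ℝ)
    (x : κ → ℝ) : P *ᵥ x ⬝ᵥ P *ᵥ x ≤ (∑ i, ∑ j, P i j ^ 2) * (x ⬝ᵥ x) := by
  rw [Finset.sum_mul]
  refine Finset.sum_le_sum fun i _ => ?_
  simpa [mulVec, dotProduct, sq] using Finset.sum_mul_sq_le_sq_mul_sq Finset.univ (P i) x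

lemma sub_dotProduct_sub_self {ι : Type*} [Fintype ι] (u v : ι → ℝ) :
    (u - v) ⬝ᵥ (u - v) = u ⬝ᵥ u - 2 * (u ⬝ᵥ v) + v ⬝ᵥ v := by
  simp only [sub_dotProduct, dotProduct_sub, dotProduct_comm v u]
  ring

lemma HasDerivAt.dotProduct {𝕜 ι : Type*} [NontriviallyNormedField 𝕜] [Fintype ι]
    {u v : 𝕜 → ι → 𝕜} {u' v' : ι → 𝕜} {t : 𝕜} (hu : HasDerivAt u u' t) (hv : HasDerivAt v v' t) :
    HasDerivAt (fun s => u s ⬝ᵥ v s) (u' ⬝ᵥ v t + u t ⬝ᵥ v') t := by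
  have h := HasDerivAt.fun_sum (u := Finset.univ) fun i _ =>
    (hasDerivAt_pi.1 hu i).fun_mul (hasDerivAt_pi.1 hv i)
  simp only [Finset.sum_add_distrib] at h
  exact h

lemma hasDerivAt_half_dotProduct_self {ι : Type*} [Fintype ι] {u : ℝ → ι → ℝ} {u' : ι → ℝ}
    {t : ℝ} (hu : HasDerivAt u u' t) :
    HasDerivAt (fun s => 1 / 2 * (u s ⬝ᵥ u s)) (u t ⬝ᵥ u') t := by
  refine ((hu.dotProduct hu).const_mul (1 / 2 : ℝ)).congr_deriv ?_
  rw [dotProduct_comm u']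
  ring

lemma dotProduct_observer_field (g a w : Fin 3 → ℝ) (k : ℝ) :
    (g - a) ⬝ᵥ (k • (a ⨯₃ g) ⨯₃ a - a ⨯₃ w) =
      k * ((a ⬝ᵥ a) * (g ⬝ᵥ g) - (g ⬝ᵥ a) ^ 2) - g ⬝ᵥ a ⨯₃ w := by
  simp only [cross_cross_eq_smul_sub_smul, dotProduct_sub, sub_dotProduct, dotProduct_smul,
    smul_eq_mul, dot_self_cross, dotProduct_comm a g]
  ring

lemma dotProduct_cross_mulVec_le {ι : Type*} [Fintype ι] (g a : Fin 3 → ℝ)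
    (P : Matrix (Fin 3) ι ℝ) (x : ι → ℝ) :
    g ⬝ᵥ a ⨯₃ (P *ᵥ x) ≤ √(g ⬝ᵥ g) * √(a ⬝ᵥ a) * √(∑ i, ∑ j, P i j ^ 2) * √(x ⬝ᵥ x) := by
  set w := P *ᵥ x
  have hcross : a ⨯₃ w ⬝ᵥ a ⨯₃ w ≤ (a ⬝ᵥ a) * (w ⬝ᵥ w) := by
    rw [cross_dot_cross, dotProduct_comm w a]
    nlinarith [sq_nonneg (a ⬝ᵥ w)]
  refine le_of_sq_le_sq ?_ (by positivity)
  simp only [mul_pow, Real.sq_sqrt (dotProduct_self_nonneg _),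
    Real.sq_sqrt (by positivity : (0 : ℝ) ≤ ∑ i, ∑ j, P i j ^ 2)]
  calc (g ⬝ᵥ a ⨯₃ w) ^ 2 ≤ (g ⬝ᵥ g) * (a ⨯₃ w ⬝ᵥ a ⨯₃ w) := sq_dotProduct_le _ _
    _ ≤ (g ⬝ᵥ g) * ((a ⬝ᵥ a) * ((∑ i, ∑ j, P i j ^ 2) * (x ⬝ᵥ x))) := by
      gcongr
      · exact dotProduct_self_nonneg g
      · exact hcross.trans (mul_le_mul_of_nonneg_left (mulVec_dotProduct_self_le P x)
          (dotProduct_self_nonneg a))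
    _ = _ := by ring

/-- Along ğ̇ = k(ğ × g) × ğ − [ğ]_× Π(t) x(t) on 𝕊²_g, with ‖Π(t)‖_F ≤ √2 k ‖g‖²,
the function L₁ = ½‖g − ğ‖² satisfies L̇₁ ≤ −2k‖g‖² L₁ + c₁ + c₂‖x‖ for suitable
constants c₁, c₂ ≥ 0 depending only on k and ‖g‖. -/
theorem stmt17 (g : Fin 3 → ℝ) (k : ℝ) (hk : 0 < k) (m : ℕ) :
    ∃ c₁ c₂ : ℝ, 0 ≤ c₁ ∧ 0 ≤ c₂ ∧
      ∀ (P : ℝ → Matrix (Fin 3) (Fin m) ℝ) (x : ℝ → Fin m → ℝ) (γ : ℝ → Fin 3 → ℝ),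
        (∀ t, Real.sqrt (∑ i, ∑ j, (P t i j) ^ 2) ≤ Real.sqrt 2 * k * (g ⬝ᵥ g)) →
        (∀ t, γ t ⬝ᵥ γ t = g ⬝ᵥ g) →
        (∀ t, HasDerivAt γ
          (k • cross (cross (γ t) g) (γ t) - ((skew (γ t)) * P t).mulVec (x t)) t) →
        ∀ t, deriv (fun s => (1 / 2) * ((g - γ s) ⬝ᵥ (g - γ s))) t ≤
          -(2 * k * (g ⬝ᵥ g)) * ((1 / 2) * ((g - γ t) ⬝ᵥ (g - γ t)))
            + c₁ + c₂ * Real.sqrt (x t ⬝ᵥ x t) := by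
  have hG : 0 ≤ g ⬝ᵥ g := dotProduct_self_nonneg g
  refine ⟨4 * k * (g ⬝ᵥ g) ^ 2, √2 * k * (g ⬝ᵥ g) ^ 2, by positivity, by positivity, ?_⟩
  intro P x γ hP hγ hd t
  rw [(hasDerivAt_half_dotProduct_self ((hd t).const_sub g)).deriv,
    dotProduct_neg, ← mulVec_mulVec, skew_mulVec, cross_eq_crossProduct, cross_eq_crossProduct,
    dotProduct_observer_field, sub_dotProduct_sub_self, hγ t]
  have hs : (g ⬝ᵥ γ t) ^ 2 ≤ (g ⬝ᵥ g) ^ 2 := by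
    simpa [hγ t, sq] using sq_dotProduct_le g (γ t)
  have hgain : -(k * ((g ⬝ᵥ g) * (g ⬝ᵥ g) - (g ⬝ᵥ γ t) ^ 2)) ≤
      -(2 * k * (g ⬝ᵥ g)) * (1 / 2 * (g ⬝ᵥ g - 2 * (g ⬝ᵥ γ t) + g ⬝ᵥ g)) +
        4 * k * (g ⬝ᵥ g) ^ 2 := by
    nlinarith [mul_nonneg hk.le (sq_nonneg (g ⬝ᵥ g + g ⬝ᵥ γ t))]
  have hinput : g ⬝ᵥ γ t ⨯₃ (P t *ᵥ x t) ≤ √2 * k * (g ⬝ᵥ g) ^ 2 * √(x t ⬝ᵥ x t) :=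
    calc _ ≤ √(g ⬝ᵥ g) * √(g ⬝ᵥ g) * √(∑ i, ∑ j, P t i j ^ 2) * √(x t ⬝ᵥ x t) :=
          hγ t ▸ dotProduct_cross_mulVec_le g (γ t) (P t) (x t)
      _ ≤ (g ⬝ᵥ g) * (√2 * k * (g ⬝ᵥ g)) * √(x t ⬝ᵥ x t) := by
          rw [Real.mul_self_sqrt hG]
          gcongr
          exact hP t
      _ = _ := by ring
  linarith
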